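/- With the notation of the ellipsoid case ($\omega_i > 0$, $\|x\|_\omega < 1$, $J_k$ as above), for every $k \geq 1$ and every $x$ in the interior of the ellipsoid, $\Delta_\xi^k J_k(x,\xi) = 0$ for all $\xi \neq 0$, where $\Delta_\xi^k$ is the $k$-th iterate of the Laplacian in $\xi$. -/

import Mathlib

/-- Scaled inner product `⟨x,y⟩_ω = ∑ i, ω_i² x_i y_i`. -/
noncomputable def wip {n : ℕ} (ω x y : Fin n → ℝ) : ℝ := ∑ i, (ω i) ^ 2 * x i * y i

/-- The Euclidean norm on `Fin n → ℝ`. -/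
noncomputable def euclidNorm {n : ℕ} (x : Fin n → ℝ) : ℝ := Real.sqrt (∑ i, (x i) ^ 2)

/-- The Laplacian `Δ f x = ∑ j, ∂²f/∂x_j² (x)` on `Fin n → ℝ`. -/
noncomputable def lap {n : ℕ} (f : (Fin n → ℝ) → ℝ) : (Fin n → ℝ) → ℝ := fun x =>
  ∑ j : Fin n, fderiv ℝ (fun y => fderiv ℝ f y (Pi.single j 1)) x (Pi.single j 1)

/-!
Write `zp ξ = x + t₊ • ξ` and `zm ξ = x + t₋ • ξ`, so that `J ξ = t₊⁻ᵏ + t₋⁻ᵏ`. The ellipsoid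
equation makes `t₊⁻¹ ≠ t₋⁻¹` the two roots of `(1 - c) s² - 2 b s - a`, where `a = ⟨ξ,ξ⟩_ω`,
`b = ⟨x,ξ⟩_ω`, `c = ⟨x,x⟩_ω`. By Vieta their sum and product are polynomials in `ξ` of degree `1`
and `2`, and the power sum `t₊⁻ᵏ + t₋⁻ᵏ` is the Lucas sequence `V_k` of these, a polynomial of total
degree `≤ k`. So on the open set `ξ ≠ 0` the function `J` agrees with a polynomial of degree `< 2k`,
which `Δᵏ` annihilates.
-/

open MvPolynomial Filter Topology

namespace MvPolynomial

variable {σ R : Type*}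

theorem totalDegree_pderiv_le [CommSemiring R] (i : σ) (p : MvPolynomial σ R) :
    (pderiv i p).totalDegree ≤ p.totalDegree - 1 := by
  refine Finset.sup_le fun m hm => ?_
  have hcoeff : coeff (m + Finsupp.single i 1) p ≠ 0 := by
    rw [mem_support_iff, coeff_pderiv] at hm
    exact left_ne_zero_of_mul hm
  have := le_totalDegree (mem_support_iff.mpr hcoeff)
  rw [Finsupp.sum_add_index' (fun _ => rfl) (fun _ _ _ => rfl),
    Finsupp.sum_single_index rfl] at this
  omega

theorem pderiv_eq_zero_of_totalDegree_eq_zero [CommSemiring R] (i : σ) {p : MvPolynomial σ R}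
    (hp : p.totalDegree = 0) : pderiv i p = 0 := by
  rw [totalDegree_eq_zero_iff_eq_C.mp hp, pderiv_C]

section Laplacian

variable [Fintype σ] [CommSemiring R]

noncomputable def laplacian (p : MvPolynomial σ R) : MvPolynomial σ R :=
  ∑ j, pderiv j (pderiv j p)

theorem totalDegree_laplacian_le (p : MvPolynomial σ R) :
    (laplacian p).totalDegree ≤ p.totalDegree - 2 :=
  totalDegree_finsetSum_le fun j _ =>
    (totalDegree_pderiv_le j _).trans (by have := totalDegree_pderiv_le j p; omega)

theorem laplacian_eq_zero_of_totalDegree_lt_two {p : MvPolynomial σ R} (hp : p.totalDegree < 2) :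
    laplacian p = 0 :=
  Finset.sum_eq_zero fun j _ => pderiv_eq_zero_of_totalDegree_eq_zero j
    (by have := totalDegree_pderiv_le j p; omega)

theorem totalDegree_iterate_laplacian_le (k : ℕ) (p : MvPolynomial σ R) :
    (laplacian^[k] p).totalDegree ≤ p.totalDegree - 2 * k := by
  induction k with
  | zero => simp
  | succ k ih =>
    rw [Function.iterate_succ_apply']
    have := totalDegree_laplacian_le (laplacian^[k] p)
    omega

theorem iterate_laplacian_eq_zero {k : ℕ} {p : MvPolynomial σ R} (hp : p.totalDegree < 2 * k) :
    laplacian^[k] p = 0 := by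
  obtain ⟨k, rfl⟩ : ∃ m, k = m + 1 := Nat.exists_eq_add_one.mpr (by omega)
  rw [Function.iterate_succ_apply']
  have := totalDegree_iterate_laplacian_le k p
  exact laplacian_eq_zero_of_totalDegree_lt_two (by omega)

end Laplacian

variable [Fintype σ]

theorem hasFDerivAt_eval (p : MvPolynomial σ ℝ) (y : σ → ℝ) :
    HasFDerivAt (fun z => eval z p)
      (∑ i, eval y (pderiv i p) • (ContinuousLinearMap.proj i : (σ → ℝ) →L[ℝ] ℝ)) y := by
  classical
  induction p using MvPolynomial.induction_on with
  | C a => simpa using hasFDerivAt_const (E := σ → ℝ) a y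
  | add p q hp hq =>
    simp only [map_add, add_smul, Finset.sum_add_distrib]
    exact hp.add hq
  | mul_X p i hp =>
    simp only [map_mul, eval_X]
    refine (hp.mul (hasFDerivAt_apply i y)).congr_fderiv ?_
    ext v
    simp [pderiv_X, Pi.single_apply, mul_add, Finset.sum_add_distrib, Finset.mul_sum, apply_ite,
      mul_comm, mul_left_comm]

theorem fderiv_eval_apply_single [DecidableEq σ] (p : MvPolynomial σ ℝ) (y : σ → ℝ) (j : σ) :
    fderiv ℝ (fun z => eval z p) y (Pi.single j 1) = eval y (pderiv j p) := by
  simp [(hasFDerivAt_eval p y).fderiv, Pi.single_apply]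

end MvPolynomial

theorem lap_eval {n : ℕ} (p : MvPolynomial (Fin n) ℝ) :
    lap (fun z => eval z p) = fun z => eval z (laplacian p) := by
  funext y
  simp only [lap, laplacian, map_sum, fderiv_eval_apply_single]

theorem iterate_lap_eval {n : ℕ} (k : ℕ) (p : MvPolynomial (Fin n) ℝ) :
    lap^[k] (fun z => eval z p) = fun z => eval z (laplacian^[k] p) := by
  induction k generalizing p with
  | zero => rfl
  | succ k ih => rw [Function.iterate_succ_apply, Function.iterate_succ_apply, lap_eval, ih]

theorem Filter.EventuallyEq.lap {n : ℕ} {f g : (Fin n → ℝ) → ℝ} {y : Fin n → ℝ}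
    (h : f =ᶠ[𝓝 y] g) : _root_.lap f =ᶠ[𝓝 y] _root_.lap g := by
  filter_upwards [h.eventuallyEq_nhds] with z hz
  refine Finset.sum_congr rfl fun j _ => ?_
  have hj : (fun w => fderiv ℝ f w (Pi.single j 1)) =ᶠ[𝓝 z]
      fun w => fderiv ℝ g w (Pi.single j 1) :=
    hz.fderiv.fun_comp (· (Pi.single j 1))
  rw [hj.fderiv_eq]

theorem Filter.EventuallyEq.iterate_lap {n : ℕ} {f g : (Fin n → ℝ) → ℝ} {y : Fin n → ℝ}
    (h : f =ᶠ[𝓝 y] g) (k : ℕ) : _root_.lap^[k] f =ᶠ[𝓝 y] _root_.lap^[k] g := by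
  induction k with
  | zero => exact h
  | succ k ih =>
    rw [Function.iterate_succ_apply', Function.iterate_succ_apply']
    exact ih.lap

section LucasV

variable {R S : Type*} [CommRing R] [CommRing S]

def lucasV (P Q : R) : ℕ → R
  | 0 => 2
  | 1 => P
  | k + 2 => P * lucasV P Q (k + 1) - Q * lucasV P Q k

theorem lucasV_add_mul (α β : R) (k : ℕ) : lucasV (α + β) (α * β) k = α ^ k + β ^ k := by
  induction k using Nat.twoStepInduction with
  | zero => norm_num [lucasV]
  | one => simp [lucasV]
  | more k ih₀ ih₁ => rw [lucasV, ih₀, ih₁]; ring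

theorem map_lucasV (f : R →+* S) (P Q : R) (k : ℕ) :
    f (lucasV P Q k) = lucasV (f P) (f Q) k := by
  induction k using Nat.twoStepInduction with
  | zero => exact map_ofNat f 2
  | one => rfl
  | more k ih₀ ih₁ => simp [lucasV, ih₀, ih₁]

theorem totalDegree_lucasV_le {σ : Type*} {P Q : MvPolynomial σ R} (hP : P.totalDegree ≤ 1)
    (hQ : Q.totalDegree ≤ 2) (k : ℕ) : (lucasV P Q k).totalDegree ≤ k := by
  induction k using Nat.twoStepInduction with
  | zero => rw [lucasV, ← map_ofNat C 2, totalDegree_C]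
  | one => simpa [lucasV] using hP
  | more k ih₀ ih₁ =>
    refine (totalDegree_sub _ _).trans (max_le ?_ ?_)
    · exact (totalDegree_mul _ _).trans (by omega)
    · exact (totalDegree_mul _ _).trans (by omega)

end LucasV

theorem add_eq_and_mul_eq_of_quadratic_roots {K : Type*} [Field K] {a b c s t : K} (ha : a ≠ 0)
    (hs : a * s ^ 2 + b * s + c = 0) (ht : a * t ^ 2 + b * t + c = 0) (hst : s ≠ t) :
    s + t = -b / a ∧ s * t = c / a := by
  have hsum : a * (s + t) + b = 0 :=
    (mul_eq_zero.mp (by linear_combination hs - ht)).resolve_left (sub_ne_zero.mpr hst)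
  exact ⟨by field_simp; linear_combination hsum, by field_simp; linear_combination t * hsum - ht⟩

theorem wip_add_smul_self {n : ℕ} (ω x ξ : Fin n → ℝ) (t : ℝ) :
    wip ω (x + t • ξ) (x + t • ξ) = wip ω x x + 2 * t * wip ω x ξ + t ^ 2 * wip ω ξ ξ := by
  simp only [wip, Finset.mul_sum, ← Finset.sum_add_distrib]
  refine Finset.sum_congr rfl fun i _ => ?_
  simp only [Pi.add_apply, Pi.smul_apply, smul_eq_mul]
  ring

theorem quadratic_inv_of_wip_add_smul_eq_one {n : ℕ} {ω x ξ : Fin n → ℝ} {t : ℝ} (ht : t ≠ 0)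
    (h : wip ω (x + t • ξ) (x + t • ξ) = 1) :
    (1 - wip ω x x) * t⁻¹ ^ 2 + -2 * wip ω x ξ * t⁻¹ + -wip ω ξ ξ = 0 := by
  rw [wip_add_smul_self] at h
  field_simp
  linear_combination -h

theorem euclidNorm_eq_norm {n : ℕ} (v : Fin n → ℝ) :
    euclidNorm v = ‖(WithLp.toLp 2 v : EuclideanSpace ℝ (Fin n))‖ := by
  simp [euclidNorm, EuclideanSpace.norm_eq]

theorem euclidNorm_pow_div_euclidNorm_sub_add_smul_pow {n : ℕ} (x : Fin n → ℝ) {ξ : Fin n → ℝ}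
    (hξ : ξ ≠ 0) (t : ℝ) (k : ℕ) :
    euclidNorm ξ ^ k / euclidNorm (x - (x + t • ξ)) ^ k = |t|⁻¹ ^ k := by
  have hξ' : euclidNorm ξ ≠ 0 := by simpa [euclidNorm_eq_norm] using hξ
  have hline : euclidNorm (x - (x + t • ξ)) = |t| * euclidNorm ξ := by
    simp [euclidNorm_eq_norm, WithLp.toLp_smul, norm_smul]
  rw [hline, mul_pow, div_mul_eq_div_div_swap, div_self (pow_ne_zero k hξ'), inv_pow, one_div]

noncomputable def wipPoly {n : ℕ} (ω : Fin n → ℝ) (P Q : Fin n → MvPolynomial (Fin n) ℝ) :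
    MvPolynomial (Fin n) ℝ :=
  ∑ i, C (ω i ^ 2) * P i * Q i

theorem eval_wipPoly {n : ℕ} (ω : Fin n → ℝ) (P Q : Fin n → MvPolynomial (Fin n) ℝ)
    (ξ : Fin n → ℝ) :
    eval ξ (wipPoly ω P Q) = wip ω (fun i => eval ξ (P i)) (fun i => eval ξ (Q i)) := by
  simp [wipPoly, wip]

theorem totalDegree_wipPoly_le {n : ℕ} (ω : Fin n → ℝ) {P Q : Fin n → MvPolynomial (Fin n) ℝ}
    {dP dQ : ℕ} (hP : ∀ i, (P i).totalDegree ≤ dP) (hQ : ∀ i, (Q i).totalDegree ≤ dQ) :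
    (wipPoly ω P Q).totalDegree ≤ dP + dQ := by
  refine totalDegree_finsetSum_le fun i _ => (totalDegree_mul _ _).trans ?_
  have := totalDegree_mul (C (ω i ^ 2)) (P i)
  rw [totalDegree_C] at this
  have := hP i; have := hQ i
  omega

/-- `V_k(P, Q)` with `P = 2⟨x,ξ⟩_ω / (1 - ⟨x,x⟩_ω)` and `Q = -⟨ξ,ξ⟩_ω / (1 - ⟨x,x⟩_ω)`, the Vieta sum
and product of the inverse ray parameters `t₊⁻¹, t₋⁻¹`; hence its value is `t₊⁻ᵏ + t₋⁻ᵏ`. -/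
noncomputable def rayPoly {n : ℕ} (ω x : Fin n → ℝ) (k : ℕ) : MvPolynomial (Fin n) ℝ :=
  lucasV (C (2 / (1 - wip ω x x)) * wipPoly ω (fun i => C (x i)) X)
    (C (-1 / (1 - wip ω x x)) * wipPoly ω X X) k

theorem totalDegree_rayPoly_le {n : ℕ} (ω x : Fin n → ℝ) (k : ℕ) :
    (rayPoly ω x k).totalDegree ≤ k := by
  refine totalDegree_lucasV_le ?_ ?_ k <;> refine (totalDegree_mul _ _).trans ?_ <;>
    rw [totalDegree_C, zero_add]
  · simpa using totalDegree_wipPoly_le ω (fun i => (totalDegree_C (x i)).le)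
      (fun i => (totalDegree_X (R := ℝ) i).le)
  · exact totalDegree_wipPoly_le ω (fun i => (totalDegree_X (R := ℝ) i).le)
      (fun i => (totalDegree_X (R := ℝ) i).le)

theorem inv_pow_add_inv_pow_eq_eval_rayPoly {n : ℕ} {ω x ξ : Fin n → ℝ} (hx : wip ω x x ≠ 1)
    {t t' : ℝ} (ht : t ≠ 0) (ht' : t' ≠ 0) (htt' : t ≠ t')
    (h : wip ω (x + t • ξ) (x + t • ξ) = 1) (h' : wip ω (x + t' • ξ) (x + t' • ξ) = 1) (k : ℕ) :
    t⁻¹ ^ k + t'⁻¹ ^ k = eval ξ (rayPoly ω x k) := by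
  obtain ⟨hsum, hprod⟩ := add_eq_and_mul_eq_of_quadratic_roots (sub_ne_zero.mpr hx.symm)
    (quadratic_inv_of_wip_add_smul_eq_one ht h) (quadratic_inv_of_wip_add_smul_eq_one ht' h')
    (inv_injective.ne htt')
  rw [← lucasV_add_mul, rayPoly, map_lucasV, hsum, hprod]
  simp only [eval_mul, eval_C, eval_wipPoly, eval_X]
  congr 1 <;> ring

theorem stmt7_general {n : ℕ} (ω x : Fin n → ℝ) (hx : wip ω x x < 1)
    (k : ℕ) (hk : 1 ≤ k) (zp zm : (Fin n → ℝ) → (Fin n → ℝ))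
    (hzp : ∀ ξ : Fin n → ℝ, ξ ≠ 0 →
      (∃ t > (0:ℝ), zp ξ = x + t • ξ) ∧ wip ω (zp ξ) (zp ξ) = 1)
    (hzm : ∀ ξ : Fin n → ℝ, ξ ≠ 0 →
      (∃ t < (0:ℝ), zm ξ = x + t • ξ) ∧ wip ω (zm ξ) (zm ξ) = 1)
    (J : (Fin n → ℝ) → ℝ)
    (hJ : ∀ ξ : Fin n → ℝ, ξ ≠ 0 →
      J ξ = euclidNorm ξ ^ k / euclidNorm (x - zp ξ) ^ k +
        (-1 : ℝ) ^ k * (euclidNorm ξ ^ k / euclidNorm (x - zm ξ) ^ k)) :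
    ∀ ξ : Fin n → ℝ, ξ ≠ 0 → lap^[k] J ξ = 0 := by
  intro ξ hξ
  have hJ_poly : J =ᶠ[𝓝 ξ] fun ζ => eval ζ (rayPoly ω x k) := by
    filter_upwards [isOpen_ne.mem_nhds hξ] with ζ hζ
    obtain ⟨⟨t, ht, hzpζ⟩, hp⟩ := hzp ζ hζ
    obtain ⟨⟨t', ht', hzmζ⟩, hm⟩ := hzm ζ hζ
    rw [hzpζ] at hp; rw [hzmζ] at hm
    rw [hJ ζ hζ, hzpζ, hzmζ, euclidNorm_pow_div_euclidNorm_sub_add_smul_pow x hζ,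
      euclidNorm_pow_div_euclidNorm_sub_add_smul_pow x hζ, abs_of_pos ht, abs_of_neg ht',
      ← mul_pow, inv_neg, neg_one_mul, neg_neg]
    exact inv_pow_add_inv_pow_eq_eval_rayPoly hx.ne ht.ne' ht'.ne (ht'.trans ht).ne' hp hm k
  rw [(hJ_poly.iterate_lap k).eq_of_nhds, iterate_lap_eval,
    iterate_laplacian_eq_zero ((totalDegree_rayPoly_le ω x k).trans_lt (by omega))]
  exact map_zero (eval ξ)

theorem stmt7 {n : ℕ} (ω x : Fin n → ℝ) (hω : ∀ i, 0 < ω i) (hx : wip ω x x < 1)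
    (k : ℕ) (hk : 1 ≤ k) (zp zm : (Fin n → ℝ) → (Fin n → ℝ))
    (hzp : ∀ ξ : Fin n → ℝ, ξ ≠ 0 →
      (∃ t > (0:ℝ), zp ξ = x + t • ξ) ∧ wip ω (zp ξ) (zp ξ) = 1)
    (hzm : ∀ ξ : Fin n → ℝ, ξ ≠ 0 →
      (∃ t < (0:ℝ), zm ξ = x + t • ξ) ∧ wip ω (zm ξ) (zm ξ) = 1)
    (J : (Fin n → ℝ) → ℝ)
    (hJ : ∀ ξ : Fin n → ℝ, ξ ≠ 0 →
      J ξ = euclidNorm ξ ^ k / euclidNorm (x - zp ξ) ^ k +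
        (-1 : ℝ) ^ k * (euclidNorm ξ ^ k / euclidNorm (x - zm ξ) ^ k)) :
    ∀ ξ : Fin n → ℝ, ξ ≠ 0 → lap^[k] J ξ = 0 :=
  stmt7_general ω x hx k hk zp zm hzp hzm J hJ
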